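/- For a trace class operator A on a separable Hilbert space and every k ≥ 0, the trace norm of the k-th exterior power satisfies ‖Λ^k(A)‖₁ ≤ ‖A‖₁^k / k!. -/

import Mathlib

noncomputable section

variable {H : Type*} [NormedAddCommGroup H] [InnerProductSpace ℂ H] [CompleteSpace H]

/-- The set of values `‖∑ ⟪T eᵢ, fᵢ⟫‖` over finite orthonormal families `e, f`;
its supremum is the trace norm `‖T‖₁`. -/
def traceNormSet (T : H →L[ℂ] H) : Set ℝ :=
  {s | ∃ (n : ℕ) (e f : Fin n → H), Orthonormal ℂ e ∧ Orthonormal ℂ f ∧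
    s = ‖∑ i, (inner ℂ (T (e i)) (f i) : ℂ)‖}

/-- `T` is trace class iff the trace-norm defining set is bounded above. -/
def IsTraceClass (T : H →L[ℂ] H) : Prop := BddAbove (traceNormSet T)

/-- The trace norm `‖T‖₁`. -/
def traceNorm (T : H →L[ℂ] H) : ℝ := sSup (traceNormSet T)

/-- The trace-norm defining set for the `k`-th exterior power `Λᵏ(A)` of `A`.
A family of decomposable wedges `eᵢ = eᵢ₁ ∧ ⋯ ∧ eᵢₖ` is orthonormal in `Λᵏ(H)` iff
the Gram determinants `det(⟪eᵢₐ, eⱼᵦ⟫)` equal `δᵢⱼ`, and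
`⟪Λᵏ(A) eᵢ, fᵢ⟫ = det(⟪A eᵢₐ, fᵢᵦ⟫)`.  Since the singular vectors of `Λᵏ(A)` are
decomposable, the supremum of this set is the trace norm `‖Λᵏ(A)‖₁`. -/
def extPowerTraceNormSet (k : ℕ) (A : H →L[ℂ] H) : Set ℝ :=
  {s | ∃ (n : ℕ) (e f : Fin n → Fin k → H),
    (∀ i j, Matrix.det (Matrix.of fun a b : Fin k => (inner ℂ (e i a) (e j b) : ℂ)) =
      if i = j then 1 else 0) ∧
    (∀ i j, Matrix.det (Matrix.of fun a b : Fin k => (inner ℂ (f i a) (f j b) : ℂ)) =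
      if i = j then 1 else 0) ∧
    s = ‖∑ i, Matrix.det (Matrix.of fun a b : Fin k => (inner ℂ (A (e i a)) (f i b) : ℂ))‖}

/-- The trace norm of the `k`-th exterior power `Λᵏ(A)`. -/
def extPowerTraceNorm (k : ℕ) (A : H →L[ℂ] H) : ℝ := sSup (extPowerTraceNormSet k A)

/-!
Given wedges `eᵢ = eᵢ₁ ∧ ⋯ ∧ eᵢₖ` and `fᵢ` as in `extPowerTraceNormSet`, compress `A` to the
finite-dimensional span `K` of all the vectors `eᵢₐ, fᵢᵦ`. The compression has a singular value
decomposition `∑ⱼ sⱼ ⟪uⱼ, ·⟫ vⱼ`, and testing `A` against the orthonormal families `(uⱼ)`,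
`(vⱼ)` shows `∑ⱼ sⱼ ≤ ‖A‖₁`. By Cauchy–Binet, `k! · ∑ᵢ det ⟪A eᵢₐ, fᵢᵦ⟫` equals
`∑_φ (∏ₐ s_{φ a}) ∑ᵢ ⟪eᵢ, u_φ⟫ ⟪v_φ, fᵢ⟫`, where `φ` runs over all maps `Fin k → Fin (dim K)` and
`u_φ = u_{φ 1} ∧ ⋯ ∧ u_{φ k}`. Bessel's inequality in `Λᵏ K` and Cauchy–Schwarz bound each
inner sum by `1`, and `∑_φ ∏ₐ s_{φ a} = (∑ⱼ sⱼ)ᵏ ≤ ‖A‖₁ᵏ`.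
-/

section

open Finset

theorem sum_norm_inner_sq_le_of_inner_eq_ite {𝕜 E ι : Type*} [RCLike 𝕜] [NormedAddCommGroup E]
    [InnerProductSpace 𝕜 E] [Fintype ι] [DecidableEq ι] {w : ι → E} {c : ℝ} (hc : 0 < c)
    (hw : ∀ i j, inner 𝕜 (w i) (w j) = if i = j then (c : 𝕜) else 0) (x : E) :
    ∑ i, ‖inner 𝕜 (w i) x‖ ^ 2 ≤ c * ‖x‖ ^ 2 := by
  set r : 𝕜 := ((√c : ℝ) : 𝕜)
  have hr : r ≠ 0 := by simpa [r] using (Real.sqrt_pos.2 hc).ne'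
  have hconj : (starRingEnd 𝕜) r = r := RCLike.conj_ofReal _
  have hrr : r ^ 2 = c := by
    simp only [r, ← RCLike.ofReal_pow, Real.sq_sqrt hc.le]
  have hv : Orthonormal 𝕜 fun i => r⁻¹ • w i := by
    rw [orthonormal_iff_ite]
    intro i j
    rw [inner_smul_left, inner_smul_right, hw, map_inv₀, hconj]
    split_ifs
    · field_simp
      exact hrr.symm
    · simp
  calc ∑ i, ‖inner 𝕜 (w i) x‖ ^ 2 = c * ∑ i, ‖inner 𝕜 (r⁻¹ • w i) x‖ ^ 2 := by
        rw [mul_sum]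
        refine sum_congr rfl fun i _ => ?_
        simp [inner_smul_left, r, mul_pow, Real.sq_sqrt hc.le, hc.ne']
    _ ≤ c * ‖x‖ ^ 2 := by gcongr; exact hv.sum_inner_products_le x

theorem norm_sum_star_mul_le_one {𝕜 ι : Type*} [RCLike 𝕜] [Fintype ι] {x y : ι → 𝕜}
    (hx : ∑ i, ‖x i‖ ^ 2 ≤ 1) (hy : ∑ i, ‖y i‖ ^ 2 ≤ 1) : ‖∑ i, star (x i) * y i‖ ≤ 1 :=
  calc ‖∑ i, star (x i) * y i‖ ≤ ∑ i, ‖x i‖ * ‖y i‖ :=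
        (norm_sum_le _ _).trans_eq (by simp [norm_mul])
    _ ≤ √(∑ i, ‖x i‖ ^ 2) * √(∑ i, ‖y i‖ ^ 2) := Real.sum_mul_le_sqrt_mul_sqrt _ _ _
    _ ≤ 1 := mul_le_one₀ (Real.sqrt_le_one.mpr hx) (Real.sqrt_nonneg _) (Real.sqrt_le_one.mpr hy)

end

namespace Matrix

open Finset

variable {R : Type*} [CommRing R] {m n : Type*} [Fintype m] [DecidableEq m]

theorem det_submatrix_eq_zero_of_not_injective (X : Matrix n m R) {φ : m → n}
    (hφ : ¬ Function.Injective φ) : det (X.submatrix φ id) = 0 := by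
  obtain ⟨a, b, hab, hne⟩ := Function.not_injective_iff.mp hφ
  exact det_zero_of_row_eq hne (congrArg X hab)

variable [Fintype n]

theorem det_transpose_mul_eq_sum (X Y : Matrix n m R) :
    det (Xᵀ * Y) = ∑ φ : m → n, (∏ a, X (φ a) a) * det (Y.submatrix φ id) := by
  have hrows : Xᵀ * Y = fun a => ∑ l, X l a • Y l := by
    ext a b
    simp [mul_apply, Finset.sum_apply]
  rw [hrows]
  exact (detRowAlternating.map_sum _).trans
    (sum_congr rfl fun φ _ => detRowAlternating.map_smul_univ _ _)

/-- Cauchy–Binet, summed over all maps `φ` instead of over `m`-subsets of `n`: each subset is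
counted `(card m)!` times, and non-injective `φ` contribute `0`. -/
theorem factorial_mul_det_transpose_mul (X Y : Matrix n m R) :
    (Fintype.card m).factorial * det (Xᵀ * Y) =
      ∑ φ : m → n, det (X.submatrix φ id) * det (Y.submatrix φ id) := by
  have hperm (σ : Equiv.Perm m) :
      det (Xᵀ * Y) = ∑ φ : m → n, (∏ a, X (φ (σ a)) a) * (σ.sign * det (Y.submatrix φ id)) := by
    rw [det_transpose_mul_eq_sum, ← (σ.symm.arrowCongr (Equiv.refl n)).sum_comp]
    refine sum_congr rfl fun φ _ => ?_
    rw [← det_permute]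
    rfl
  calc ((Fintype.card m).factorial : R) * det (Xᵀ * Y)
      = ∑ σ : Equiv.Perm m, det (Xᵀ * Y) := by
        rw [sum_const, card_univ, Fintype.card_perm, nsmul_eq_mul]
    _ = ∑ σ : Equiv.Perm m, ∑ φ : m → n,
          (∏ a, X (φ (σ a)) a) * (σ.sign * det (Y.submatrix φ id)) :=
        sum_congr rfl fun σ _ => hperm σ
    _ = _ := by
      rw [sum_comm]
      refine sum_congr rfl fun φ _ => ?_
      rw [det_apply' (X.submatrix φ id), sum_mul]
      refine sum_congr rfl fun σ _ => ?_
      simp only [submatrix_apply, id]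
      ring

theorem det_submatrix_diagonal_mul [DecidableEq n] (d : n → R) (X : Matrix n m R) (φ : m → n) :
    det ((diagonal d * X).submatrix φ id) = (∏ a, d (φ a)) * det (X.submatrix φ id) := by
  rw [← det_mul_column]
  congr 1
  ext a b
  simp [diagonal_mul]

variable {𝕜 : Type*} [RCLike 𝕜]

theorem factorial_mul_det_conjTranspose_mul (X Y : Matrix n m 𝕜) :
    (Fintype.card m).factorial * det (Xᴴ * Y) =
      ∑ φ : m → n, star (det (X.submatrix φ id)) * det (Y.submatrix φ id) := by
  rw [conjTranspose, transpose_map, factorial_mul_det_transpose_mul]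
  refine sum_congr rfl fun φ _ => ?_
  rw [submatrix_map]
  exact congrArg (· * _) ((starRingEnd 𝕜).map_det _).symm

/-- The exterior product of the columns of `X`, as an unnormalised antisymmetric tensor in
`(𝕜ⁿ)^{⊗ m}`. -/
def columnWedge (X : Matrix n m 𝕜) : EuclideanSpace 𝕜 (m → n) :=
  WithLp.toLp 2 fun φ => det (X.submatrix φ id)

theorem inner_columnWedge (X Y : Matrix n m 𝕜) :
    inner 𝕜 (columnWedge X) (columnWedge Y) = (Fintype.card m).factorial * det (Xᴴ * Y) := by
  rw [factorial_mul_det_conjTranspose_mul, PiLp.inner_apply]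
  exact sum_congr rfl fun φ _ => RCLike.inner_apply' _ _

/-- Up to the factor `m!`, `det (X.submatrix φ id)` is the inner product of `columnWedge X` with
the wedge of the unit vectors `e_{φ a}`, so this is Bessel's inequality in the exterior power. -/
theorem sum_norm_det_submatrix_sq_le_one {ι : Type*} [Fintype ι] [DecidableEq ι]
    (P : ι → Matrix n m 𝕜) (hP : ∀ i j, det ((P i)ᴴ * P j) = if i = j then 1 else 0)
    (φ : m → n) : ∑ i, ‖det ((P i).submatrix φ id)‖ ^ 2 ≤ 1 := by
  by_cases hφ : Function.Injective φ
  swap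
  · simp [det_submatrix_eq_zero_of_not_injective _ hφ]
  classical
  set c : ℝ := ((Fintype.card m).factorial : ℝ)
  have hc : 0 < c := by positivity
  set Z : Matrix n m 𝕜 := (1 : Matrix n n 𝕜).submatrix id φ
  have hZ (X : Matrix n m 𝕜) : Zᴴ * X = X.submatrix φ id := by
    ext a b
    simp [Z, mul_apply, one_apply]
  have hZZ : ‖columnWedge Z‖ ^ 2 = c := by
    have h := inner_self_eq_norm_sq_to_K (𝕜 := 𝕜) (columnWedge Z)
    rw [inner_columnWedge, hZ, submatrix_submatrix, Function.comp_id, Function.id_comp,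
      submatrix_one _ hφ, det_one, mul_one] at h
    exact_mod_cast h.symm
  have hPZ (i : ι) :
      ‖inner 𝕜 (columnWedge (P i)) (columnWedge Z)‖ = c * ‖det ((P i).submatrix φ id)‖ := by
    rw [norm_inner_symm, inner_columnWedge, hZ, norm_mul]
    simp [c]
  have hbessel := sum_norm_inner_sq_le_of_inner_eq_ite (w := fun i => columnWedge (P i)) hc
    (fun i j => by rw [inner_columnWedge, hP]; split_ifs <;> simp [c]) (columnWedge Z)
  simp only [hPZ, hZZ, mul_pow, ← mul_sum, ← sq] at hbessel
  exact (mul_le_iff_le_one_right (pow_pos hc 2)).mp hbessel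

theorem norm_sum_det_conjTranspose_mul_diagonal_mul_le [DecidableEq n] {ι : Type*} [Fintype ι]
    [DecidableEq ι] (P Q : ι → Matrix n m 𝕜)
    (hP : ∀ i j, det ((P i)ᴴ * P j) = if i = j then 1 else 0)
    (hQ : ∀ i j, det ((Q i)ᴴ * Q j) = if i = j then 1 else 0) (s : n → ℝ) (hs : ∀ l, 0 ≤ s l) :
    ‖∑ i, det ((P i)ᴴ * diagonal (fun l => (s l : 𝕜)) * Q i)‖ ≤
      (∑ l, s l) ^ Fintype.card m / (Fintype.card m).factorial := by
  have hexpand : ((Fintype.card m).factorial : 𝕜) *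
      ∑ i, det ((P i)ᴴ * diagonal (fun l => (s l : 𝕜)) * Q i) =
        ∑ φ : m → n, (∏ a, (s (φ a) : 𝕜)) *
          ∑ i, star (det ((P i).submatrix φ id)) * det ((Q i).submatrix φ id) := by
    simp_rw [mul_sum, Matrix.mul_assoc, factorial_mul_det_conjTranspose_mul,
      det_submatrix_diagonal_mul]
    rw [sum_comm]
    refine sum_congr rfl fun φ _ => sum_congr rfl fun i _ => ?_
    ring
  have hterm (φ : m → n) :
      ‖∑ i, star (det ((P i).submatrix φ id)) * det ((Q i).submatrix φ id)‖ ≤ 1 :=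
    norm_sum_star_mul_le_one (sum_norm_det_submatrix_sq_le_one P hP φ)
      (sum_norm_det_submatrix_sq_le_one Q hQ φ)
  rw [le_div_iff₀ (by positivity)]
  calc ‖∑ i, det ((P i)ᴴ * diagonal (fun l => (s l : 𝕜)) * Q i)‖ * (Fintype.card m).factorial
      = ‖∑ φ : m → n, (∏ a, (s (φ a) : 𝕜)) *
          ∑ i, star (det ((P i).submatrix φ id)) * det ((Q i).submatrix φ id)‖ := by
        rw [← hexpand, norm_mul, mul_comm, RCLike.norm_natCast]
    _ ≤ ∑ φ : m → n, ∏ a, s (φ a) := by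
        refine (norm_sum_le _ _).trans (sum_le_sum fun φ _ => ?_)
        rw [norm_mul, norm_prod]
        simp_rw [RCLike.norm_ofReal, abs_of_nonneg (hs _)]
        exact mul_le_of_le_one_right (prod_nonneg fun a _ => hs _) (hterm φ)
    _ = (∑ l, s l) ^ Fintype.card m := by
        rw [← Fintype.prod_sum, prod_const, card_univ]

end Matrix

section

open Finset Matrix

variable {𝕜 E ι m m' : Type*} [RCLike 𝕜] [NormedAddCommGroup E] [InnerProductSpace 𝕜 E]
  [Fintype ι]

theorem OrthonormalBasis.conjTranspose_toMatrix_mul_toMatrix (b : OrthonormalBasis ι 𝕜 E)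
    (x : m → E) (y : m' → E) :
    (b.toBasis.toMatrix x)ᴴ * b.toBasis.toMatrix y = of fun a c => inner 𝕜 (x a) (y c) := by
  ext a c
  simp [mul_apply, Module.Basis.toMatrix_apply, b.repr_apply_apply, b.sum_inner_mul_inner]

theorem OrthonormalBasis.conjTranspose_toMatrix_mul_diagonal_mul_toMatrix [DecidableEq ι]
    (u v : OrthonormalBasis ι 𝕜 E) (d : ι → 𝕜) (x : m → E) (y : m' → E) :
    (u.toBasis.toMatrix x)ᴴ * diagonal d * v.toBasis.toMatrix y =
      of fun a c => ∑ j, inner 𝕜 (x a) (u j) * d j * inner 𝕜 (v j) (y c) := by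
  ext a c
  simp [mul_apply, diagonal_apply, Module.Basis.toMatrix_apply, OrthonormalBasis.repr_apply_apply]

end

open Module in
theorem LinearMap.exists_orthonormalBasis_apply_eq_smul {𝕜 E F : Type*} [RCLike 𝕜]
    [NormedAddCommGroup E] [InnerProductSpace 𝕜 E] [FiniteDimensional 𝕜 E]
    [NormedAddCommGroup F] [InnerProductSpace 𝕜 F] [FiniteDimensional 𝕜 F] {N : ℕ}
    (hE : finrank 𝕜 E = N) (hF : finrank 𝕜 F = N) (B : E →ₗ[𝕜] F) :
    ∃ (u : OrthonormalBasis (Fin N) 𝕜 E) (v : OrthonormalBasis (Fin N) 𝕜 F) (s : Fin N → ℝ),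
      (∀ j, 0 ≤ s j) ∧ ∀ j, B (u j) = (s j : 𝕜) • v j := by
  have hT := B.isPositive_adjoint_comp_self
  set u := hT.isSymmetric.eigenvectorBasis hE
  set s : Fin N → ℝ := fun j => √(hT.isSymmetric.eigenvalues hE j)
  have hBu (i j : Fin N) :
      inner 𝕜 (B (u i)) (B (u j)) = if i = j then ((s i ^ 2 : ℝ) : 𝕜) else 0 := by
    rw [← LinearMap.adjoint_inner_right, ← LinearMap.comp_apply,
      hT.isSymmetric.apply_eigenvectorBasis, inner_smul_right,
      orthonormal_iff_ite.mp u.orthonormal, Real.sq_sqrt (hT.nonneg_eigenvalues hE i)]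
    split_ifs with h <;> simp [h]
  have hw : Orthonormal 𝕜 ({j | s j ≠ 0}.domRestrict fun j => (s j : 𝕜)⁻¹ • B (u j)) := by
    rw [orthonormal_iff_ite]
    rintro ⟨i, hi⟩ ⟨j, hj⟩
    simp only [Set.domRestrict_apply, inner_smul_left, inner_smul_right, hBu, Subtype.mk.injEq]
    split_ifs with h
    · subst h
      have hsi : (s i : 𝕜) ≠ 0 := by exact_mod_cast hi
      rw [map_inv₀, RCLike.conj_ofReal, RCLike.ofReal_pow]
      field_simp
    · simp
  obtain ⟨v, hv⟩ := hw.exists_orthonormalBasis_extension_of_card_eq (by simp [hF])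
  refine ⟨u, v, s, fun j => Real.sqrt_nonneg _, fun j => ?_⟩
  by_cases hj : s j = 0
  · have hBuj : B (u j) = 0 := by simpa [hj] using hBu j j
    simp [hj, hBuj]
  · rw [hv j hj, smul_smul, mul_inv_cancel₀ (by exact_mod_cast hj), one_smul]

open Finset Module in
theorem IsTraceClass.exists_svd_of_finiteDimensional {E : Type*} [NormedAddCommGroup E]
    [InnerProductSpace ℂ E] {A : E →L[ℂ] E} (hA : IsTraceClass A) (K : Submodule ℂ E)
    [FiniteDimensional ℂ K] :
    ∃ (u v : OrthonormalBasis (Fin (finrank ℂ K)) ℂ K) (s : Fin (finrank ℂ K) → ℝ),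
      (∀ j, 0 ≤ s j) ∧ ∑ j, s j ≤ traceNorm A ∧
      ∀ x y : K, inner ℂ (A x) (y : E) = ∑ j, inner ℂ x (u j) * s j * inner ℂ (v j) y := by
  let B : K →ₗ[ℂ] K := (K.orthogonalProjectionOnto ∘L A ∘L K.subtypeL).toLinearMap
  have hB (x y : K) : inner ℂ (B x) y = inner ℂ (A x) (y : E) :=
    K.inner_orthogonalProjectionOnto_eq_of_mem_right y (A x)
  obtain ⟨u, v, s, hs, huv⟩ := B.exists_orthonormalBasis_apply_eq_smul rfl rfl
  refine ⟨u, v, s, hs, ?_, fun x y => ?_⟩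
  · have hdiag (j) : inner ℂ (A (u j)) (v j : E) = s j := by
      rw [← hB, huv, inner_smul_left, inner_self_eq_norm_sq_to_K, v.orthonormal.1 j]
      simp
    have hmem : ‖∑ j, inner ℂ (A (u j)) (v j : E)‖ ∈ traceNormSet A :=
      ⟨_, _, _, u.orthonormal.comp_linearIsometry K.subtypeₗᵢ,
        v.orthonormal.comp_linearIsometry K.subtypeₗᵢ, rfl⟩
    calc ∑ j, s j = ‖∑ j, inner ℂ (A (u j)) (v j : E)‖ := by
          simp_rw [hdiag]
          rw [← Complex.ofReal_sum, Complex.norm_real,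
            Real.norm_of_nonneg (sum_nonneg fun j _ => hs j)]
      _ ≤ traceNorm A := le_csSup hA hmem
  · conv_lhs => rw [← hB, ← u.sum_repr' x]
    rw [map_sum, sum_inner]
    refine sum_congr rfl fun j _ => ?_
    rw [map_smul, huv, inner_smul_left, inner_smul_left, inner_conj_symm]
    simp only [Complex.coe_algebraMap, Complex.conj_ofReal]
    ring

open Matrix in
theorem IsTraceClass.exists_inner_matrix_factorization {E : Type*} [NormedAddCommGroup E]
    [InnerProductSpace ℂ E] {A : E →L[ℂ] E} (hA : IsTraceClass A) {ι m : Type*} [Finite ι]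
    [Finite m] (e f : ι → m → E) :
    ∃ (N : ℕ) (P Q : ι → Matrix (Fin N) m ℂ) (s : Fin N → ℝ),
      (∀ j, 0 ≤ s j) ∧ ∑ j, s j ≤ traceNorm A ∧
      (∀ i i', (P i)ᴴ * P i' = of fun a b => inner ℂ (e i a) (e i' b)) ∧
      (∀ i i', (Q i)ᴴ * Q i' = of fun a b => inner ℂ (f i a) (f i' b)) ∧
      ∀ i, (P i)ᴴ * diagonal (fun j => (s j : ℂ)) * Q i =
        of fun a b => inner ℂ (A (e i a)) (f i b) := by
  let K := Submodule.span ℂ (Set.range (Function.uncurry e) ∪ Set.range (Function.uncurry f))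
  have : FiniteDimensional ℂ K :=
    FiniteDimensional.span_of_finite ℂ ((Set.finite_range _).union (Set.finite_range _))
  obtain ⟨u, v, s, hs, hsum, hA'⟩ := hA.exists_svd_of_finiteDimensional K
  let e' (i : ι) (a : m) : K := ⟨e i a, Submodule.subset_span (.inl ⟨(i, a), rfl⟩)⟩
  let f' (i : ι) (a : m) : K := ⟨f i a, Submodule.subset_span (.inr ⟨(i, a), rfl⟩)⟩
  refine ⟨_, fun i => u.toBasis.toMatrix (e' i), fun i => v.toBasis.toMatrix (f' i), s, hs, hsum,
    fun i i' => u.conjTranspose_toMatrix_mul_toMatrix _ _,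
    fun i i' => v.conjTranspose_toMatrix_mul_toMatrix _ _, fun i => ?_⟩
  rw [u.conjTranspose_toMatrix_mul_diagonal_mul_toMatrix]
  ext a b
  exact (hA' (e' i a) (f' i b)).symm

/-- For a trace class operator `A` on a separable Hilbert space and every `k ≥ 0`,
`‖Λᵏ(A)‖₁ ≤ ‖A‖₁ᵏ / k!`. -/
theorem extPowerTraceNorm_le (A : H →L[ℂ] H) (hA : IsTraceClass A) (k : ℕ) :
    extPowerTraceNorm k A ≤ traceNorm A ^ k / (Nat.factorial k) := by
  have hnorm : 0 ≤ traceNorm A :=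
    Real.sSup_nonneg fun _ ⟨_, _, _, _, _, hs⟩ => hs ▸ norm_nonneg _
  refine Real.sSup_le ?_ (by positivity)
  rintro _ ⟨n, e, f, he, hf, rfl⟩
  obtain ⟨N, P, Q, s, hs, hsum, hP, hQ, hM⟩ := hA.exists_inner_matrix_factorization e f
  simp_rw [← hM]
  calc _ ≤ (∑ j, s j) ^ Fintype.card (Fin k) / (Fintype.card (Fin k)).factorial :=
        Matrix.norm_sum_det_conjTranspose_mul_diagonal_mul_le P Q (fun i j => hP i j ▸ he i j)
          (fun i j => hQ i j ▸ hf i j) s hs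
    _ ≤ traceNorm A ^ k / k.factorial := by
        rw [Fintype.card_fin]
        gcongr
        exact Finset.sum_nonneg fun j _ => hs j

end
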